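/- Let f : V' → V' be a linear endomorphism of a finite-dimensional complex vector space with f² = 0 and rk(f) ≤ dim(V), where V is another finite-dimensional complex vector space. Then there exist linear maps u₁ : V' → V and u₂ : V → V' such that u₂ ∘ u₁ = f and u₁ ∘ u₂ = 0. -/

import Mathlib

/-! Embed `range f` into `V` by `j` and pull back with a retraction `p` of `j`: then
`u₁ = j ∘ f` and `u₂ = p` (landing in `range f`) compose to `f`, and `u₁ ∘ u₂` vanishes because
`range f ⊆ ker f` when `f² = 0`. -/

open LinearMap Module

theorem LinearMap.exists_factor_of_finrank_range_le {K M N V : Type*} [DivisionRing K]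
    [AddCommGroup M] [Module K M] [AddCommGroup N] [Module K N] [AddCommGroup V] [Module K V]
    [FiniteDimensional K M] [FiniteDimensional K V]
    (f : M →ₗ[K] N) (h : finrank K (range f) ≤ finrank K V) :
    ∃ (u₁ : M →ₗ[K] V) (u₂ : V →ₗ[K] N),
      u₂ ∘ₗ u₁ = f ∧ range u₂ ≤ range f ∧ ker f ≤ ker u₁ := by
  obtain ⟨j, hj⟩ := finrank_le_iff_exists_linearMap.mp h
  obtain ⟨p, hp⟩ := j.exists_leftInverse_of_injective (ker_eq_bot.mpr hj)
  refine ⟨j ∘ₗ f.rangeRestrict, (range f).subtype ∘ₗ p, ?_, ?_, ?_⟩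
  · rw [comp_assoc, ← comp_assoc f.rangeRestrict j p, hp, id_comp]
    rfl
  · simpa only [Submodule.range_subtype] using range_comp_le_range p (range f).subtype
  · simpa only [ker_rangeRestrict] using ker_le_ker_comp f.rangeRestrict j

theorem stmt_2 (V V' : Type*) [AddCommGroup V] [Module ℂ V] [AddCommGroup V'] [Module ℂ V']
    [FiniteDimensional ℂ V] [FiniteDimensional ℂ V']
    (f : V' →ₗ[ℂ] V') (hf : f ∘ₗ f = 0)
    (hrk : Module.finrank ℂ (LinearMap.range f) ≤ Module.finrank ℂ V) :
    ∃ (u₁ : V' →ₗ[ℂ] V) (u₂ : V →ₗ[ℂ] V'), u₂ ∘ₗ u₁ = f ∧ u₁ ∘ₗ u₂ = 0 := by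
  obtain ⟨u₁, u₂, hfactor, hrange, hker⟩ := f.exists_factor_of_finrank_range_le hrk
  have hsquare : range f ≤ ker f := range_le_ker_iff.mpr hf
  exact ⟨u₁, u₂, hfactor, range_le_ker_iff.mp (hrange.trans (hsquare.trans hker))⟩
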